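/- For every α ∈ (2/3, 1), the series ∑_{i=1}^∞ i·(2i−1)·(1−α) · (2/4^i) · ((2i−2)!/((i−1)!·(i+1)!)) · (2/α − 2)^i converges, and α + ∑_{i=1}^∞ i·(2i−1)·(1−α) · (2/4^i) · ((2i−2)!/((i−1)!·(i+1)!)) · (2/α − 2)^i = α(2α−1)/√(α(3α−2)). -/

import Mathlib

/-- The `i`-th summand `q₋ᵢ(α)·E[Bᵢ]` in the expected volume increase per peeling step:
`i·(2i−1)·(1−α) · (2/4^i) · ((2i−2)!/((i−1)!·(i+1)!)) · (2/α − 2)^i`. -/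
noncomputable def volTerm (α : ℝ) (i : ℕ) : ℝ :=
  (i : ℝ) * (2 * (i : ℝ) - 1) * (1 - α) * (2 / 4 ^ i) *
    ((Nat.factorial (2 * i - 2) : ℝ) /
      ((Nat.factorial (i - 1) : ℝ) * (Nat.factorial (i + 1) : ℝ))) *
    (2 / α - 2) ^ i

/-!
Put `t = (1 - α) / (2α)`, so that `2/α - 2 = 4t` and `0 < t < 1/4`. The `(i+1)`-th term is
`α·C(2i+4, i+2)·t^(i+2) - (1 - α)·C(2i+2, i+1)·t^(i+1)`, so the series is a combination of two
tails of the central binomial series `∑ C(2n, n) tⁿ = 1/√(1 - 4t)`, which is the binomial series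
of `(1 - x)^(-1/2)` at `x = 4t`. Summing, `α + ∑ = (2α - 1)/√(1 - 4t) = α(2α - 1)/√(α(3α - 2))`.
-/

open Nat Polynomial

theorem ascPochhammer_eval_half_mul_four_pow (n : ℕ) :
    (ascPochhammer ℝ n).eval (1 / 2 : ℝ) * 4 ^ n = centralBinom n * n ! := by
  induction n with
  | zero => simp
  | succ n ih =>
    have h : ((n + 1 : ℕ) : ℝ) * centralBinom (n + 1) = 2 * (2 * n + 1) * centralBinom n := by
      exact_mod_cast succ_mul_centralBinom_succ n
    rw [ascPochhammer_succ_eval, factorial_succ]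
    push_cast at h ⊢
    linear_combination (2 * (2 * (n : ℝ) + 1)) * ih - (n ! : ℝ) * h

theorem Ring.choose_half_add_sub_one (n : ℕ) :
    Ring.choose ((1 / 2 : ℝ) + n - 1) n = centralBinom n / 4 ^ n := by
  rw [Ring.choose_eq_smul, descPochhammer_smeval_eq_ascPochhammer, ascPochhammer_smeval_eq_eval,
    smul_eq_mul, eq_div_iff (by positivity), show (1 / 2 : ℝ) + n - 1 - n + 1 = 1 / 2 by ring,
    mul_assoc, ascPochhammer_eval_half_mul_four_pow, inv_mul_eq_div,
    mul_div_cancel_right₀ _ (by positivity)]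

theorem hasSum_centralBinom_mul_pow {x : ℝ} (hx : |x| < 1 / 4) :
    HasSum (fun n ↦ (centralBinom n : ℝ) * x ^ n) (1 / √(1 - 4 * x)) := by
  have h4x : 4 * x ∈ Metric.eball (0 : ℝ) 1 := by
    rw [Metric.mem_eball, edist_dist, ENNReal.ofReal_lt_one, Real.dist_0_eq_abs, abs_mul]
    norm_num
    linarith
  have h := (Real.one_div_one_sub_rpow_hasFPowerSeriesOnBall_zero (1 / 2)).hasSum h4x
  rw [FormalMultilinearSeries.ofScalars_apply_eq', zero_add, ← Real.sqrt_eq_rpow] at h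
  refine h.congr_fun fun n ↦ ?_
  rw [Ring.choose_half_add_sub_one, smul_eq_mul, mul_pow]
  field_simp

theorem centralBinom_add_two_sub_two_mul (n : ℕ) :
    (centralBinom (n + 2) : ℝ) - 2 * centralBinom (n + 1) =
      4 * (2 * n + 1) * centralBinom n / (n + 2) := by
  have h₁ : ((n + 1 : ℕ) : ℝ) * centralBinom (n + 1) = 2 * (2 * n + 1) * centralBinom n := by
    exact_mod_cast succ_mul_centralBinom_succ n
  have h₂ : ((n + 2 : ℕ) : ℝ) * centralBinom (n + 2) =
      2 * (2 * (n + 1 : ℕ) + 1) * centralBinom (n + 1) := by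
    exact_mod_cast succ_mul_centralBinom_succ (n + 1)
  push_cast at h₁ h₂
  field_simp
  linear_combination h₂ + 2 * h₁

theorem factorial_two_mul_div_factorial_mul_factorial_add_two (n : ℕ) :
    ((2 * n) ! : ℝ) / (n ! * (n + 2) !) = centralBinom n / ((n + 1) * (n + 2)) := by
  rw [centralBinom_eq_two_mul_choose, Nat.cast_choose ℝ (by omega : n ≤ 2 * n),
    show 2 * n - n = n by omega, factorial_succ, factorial_succ]
  push_cast
  field_simp
  ring

theorem volTerm_succ {α t : ℝ} (ht : 2 * α * t = 1 - α) (n : ℕ) :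
    volTerm α (n + 1) = α * (centralBinom (n + 2) * t ^ (n + 2)) -
      (1 - α) * (centralBinom (n + 1) * t ^ (n + 1)) := by
  have hα : α ≠ 0 := by rintro rfl; norm_num at ht
  have h4t : 2 / α - 2 = 4 * t := by field_simp; linarith
  calc volTerm α (n + 1)
      = (1 - α) / 2 * (centralBinom (n + 2) - 2 * centralBinom (n + 1)) * t ^ (n + 1) := by
        rw [volTerm, h4t, show 2 * (n + 1) - 2 = 2 * n by omega, Nat.add_sub_cancel,
          factorial_two_mul_div_factorial_mul_factorial_add_two,
          centralBinom_add_two_sub_two_mul, mul_pow]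
        push_cast
        field_simp
        ring
    _ = _ := by linear_combination (-(centralBinom (n + 2) : ℝ) * t ^ (n + 1) / 2) * ht

/-- For `α ∈ (2/3, 1)` the series `∑_{i≥1} i(2i−1)(1−α)(2/4^i)((2i−2)!/((i−1)!(i+1)!))(2/α−2)^i`
converges, and adding `α` to its sum gives `α(2α−1)/√(α(3α−2))`. -/
theorem expected_volume_increase (α : ℝ) (hα : α ∈ Set.Ioo (2/3 : ℝ) 1) :
    Summable (fun i : ℕ => volTerm α (i + 1)) ∧
    α + ∑' i : ℕ, volTerm α (i + 1) =
      α * (2 * α - 1) / Real.sqrt (α * (3 * α - 2)) := by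
  obtain ⟨hα₁, hα₂⟩ := hα
  set t := (1 - α) / (2 * α) with ht_def
  have ht : 2 * α * t = 1 - α := by rw [ht_def]; field_simp
  have ht_abs : |t| < 1 / 4 := by
    rw [abs_lt, ht_def, lt_div_iff₀ (by linarith), div_lt_div_iff₀ (by linarith) (by norm_num)]
    constructor <;> linarith
  have hG : HasSum (fun n ↦ (centralBinom n : ℝ) * t ^ n) (α / √(α * (3 * α - 2))) := by
    rw [show α * (3 * α - 2) = α ^ 2 * (1 - 4 * t) by linear_combination 2 * α * ht,
      Real.sqrt_mul (sq_nonneg α), Real.sqrt_sq (by linarith), ← div_div, div_self (by linarith)]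
    exact hasSum_centralBinom_mul_pow ht_abs
  set G := α / √(α * (3 * α - 2))
  have hG₁ : HasSum (fun n ↦ (centralBinom (n + 1) : ℝ) * t ^ (n + 1)) (G - 1) := by
    simpa using (hasSum_nat_add_iff' 1).mpr hG
  have hG₂ : HasSum (fun n ↦ (centralBinom (n + 2) : ℝ) * t ^ (n + 2)) (G - (1 + 2 * t)) := by
    simpa [Finset.sum_range_succ, show centralBinom 1 = 2 from rfl]
      using (hasSum_nat_add_iff' 2).mpr hG
  have hsum := (hG₂.mul_left α).sub (hG₁.mul_left (1 - α))
  simp only [← volTerm_succ ht] at hsum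
  refine ⟨hsum.summable, ?_⟩
  rw [hsum.tsum_eq]
  linear_combination (-1) * ht
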